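/- arXiv:2305.08310 — 2 statements merged into one kernel-verified Lean document; each statement's English description precedes it below -/
import Mathlib

section
/- The function A(x,t) = e^{i·t²/10} · e^{(1+i)x} · (cosh t)^{-2} / (1 + (1/8)·e^{2x}·(cosh t)^{-4}) satisfies i·A_t + tanh(t)·A_xx + (t/5)·A + tanh(t)·|A|²·A = 0 for all (x,t) ∈ ℝ². -/
/-!
Write `A(x,t) = e^{i(θ(t) + x)} s(x - 2τ(t))` with `θ(t) = t²/10`, `τ(t) = log cosh t` and the
real profile `s(ξ) = e^ξ / (1 + e^{2ξ}/8) = √2 sech(ξ - log √8)`. For any such gauged, boosted and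
time-changed wave `e^{i(θ + kx)} s(x - 2kτ)`, the left-hand side of the equation with `α = γ = τ'`
and `β = θ'` collapses to `τ' e^{i(θ + kx)} (s'' - k² s + |s|² s)`, and the sech profile solves the
stationary equation `s'' = s - s³`.
-/

open Complex

noncomputable section

def solitonProfile (ξ : ℝ) : ℝ := Real.exp ξ / (1 + Real.exp ξ ^ 2 / 8)

def solitonProfileDeriv (ξ : ℝ) : ℝ :=
  Real.exp ξ * (1 - Real.exp ξ ^ 2 / 8) / (1 + Real.exp ξ ^ 2 / 8) ^ 2

lemma one_add_exp_sq_div_eight_pos (ξ : ℝ) : 0 < 1 + Real.exp ξ ^ 2 / 8 := by positivity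

lemma hasDerivAt_exp_sq_div_eight (ξ : ℝ) :
    HasDerivAt (fun ξ => Real.exp ξ ^ 2 / 8) (Real.exp ξ ^ 2 / 4) ξ :=
  (((Real.hasDerivAt_exp ξ).fun_pow 2).div_const 8).congr_deriv (by ring)

lemma hasDerivAt_solitonProfile (ξ : ℝ) :
    HasDerivAt solitonProfile (solitonProfileDeriv ξ) ξ := by
  have hD := (one_add_exp_sq_div_eight_pos ξ).ne'
  refine ((Real.hasDerivAt_exp ξ).fun_div ((hasDerivAt_exp_sq_div_eight ξ).const_add 1)
    hD).congr_deriv ?_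
  unfold solitonProfileDeriv
  field_simp
  ring

lemma hasDerivAt_solitonProfileDeriv (ξ : ℝ) :
    HasDerivAt solitonProfileDeriv (solitonProfile ξ - solitonProfile ξ ^ 3) ξ := by
  have hD := (one_add_exp_sq_div_eight_pos ξ).ne'
  have hu := hasDerivAt_exp_sq_div_eight ξ
  refine (((Real.hasDerivAt_exp ξ).fun_mul (hu.const_sub 1)).fun_div
    ((hu.const_add 1).fun_pow 2) (pow_ne_zero 2 hD)).congr_deriv ?_
  unfold solitonProfile
  field_simp
  ring

lemma hasDerivAt_ofReal_solitonProfileDeriv (ξ : ℝ) :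
    HasDerivAt (fun ξ => (solitonProfileDeriv ξ : ℂ))
      (((1 : ℝ) : ℂ) ^ 2 * solitonProfile ξ
        - (‖(solitonProfile ξ : ℂ)‖ : ℂ) ^ 2 * solitonProfile ξ) ξ := by
  refine (hasDerivAt_solitonProfileDeriv ξ).ofReal_comp.congr_deriv ?_
  simp only [Complex.norm_real, Real.norm_eq_abs, ← Complex.ofReal_pow, sq_abs]
  push_cast
  ring

def modulatedWave (θ τ : ℝ → ℝ) (s : ℝ → ℂ) (k x t : ℝ) : ℂ :=
  exp (↑(θ t + k * x) * I) * s (x - 2 * k * τ t)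

section modulatedWave

variable {θ τ : ℝ → ℝ} {s s' : ℝ → ℂ} {k : ℝ}

lemma norm_modulatedWave (x t : ℝ) :
    ‖modulatedWave θ τ s k x t‖ = ‖s (x - 2 * k * τ t)‖ := by
  simp only [modulatedWave, norm_mul, norm_exp_ofReal_mul_I, one_mul]

lemma hasDerivAt_modulatedWave_space (hs : ∀ ξ, HasDerivAt s (s' ξ) ξ) (x t : ℝ) :
    HasDerivAt (fun y => modulatedWave θ τ s k y t)
      (modulatedWave θ τ (fun ξ => k * I * s ξ + s' ξ) k x t) x := by
  have hphase : HasDerivAt (fun y : ℝ => ↑(θ t + k * y) * I) (k * I) x := by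
    simpa using (((hasDerivAt_id x).const_mul k).const_add (θ t)).ofReal_comp.mul_const I
  have hshift : HasDerivAt (fun y : ℝ => s (y - 2 * k * τ t)) (s' (x - 2 * k * τ t)) x :=
    (hs _).comp_sub_const x _
  refine (hphase.cexp.mul hshift).congr_deriv ?_
  simp only [modulatedWave]
  ring

lemma deriv_modulatedWave_space (hs : ∀ ξ, HasDerivAt s (s' ξ) ξ) (t : ℝ) :
    deriv (fun y => modulatedWave θ τ s k y t)
      = fun x => modulatedWave θ τ (fun ξ => k * I * s ξ + s' ξ) k x t :=
  funext fun x => (hasDerivAt_modulatedWave_space hs x t).deriv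

lemma hasDerivAt_modulatedWave_time {θ' τ' : ℝ} (hs : ∀ ξ, HasDerivAt s (s' ξ) ξ) (x t : ℝ)
    (hθ : HasDerivAt θ θ' t) (hτ : HasDerivAt τ τ' t) :
    HasDerivAt (fun t => modulatedWave θ τ s k x t)
      (modulatedWave θ τ (fun ξ => θ' * I * s ξ - 2 * k * τ' * s' ξ) k x t) t := by
  have hphase : HasDerivAt (fun t : ℝ => ↑(θ t + k * x) * I) (θ' * I) t := by
    simpa using (hθ.add_const (k * x)).ofReal_comp.mul_const I
  have hshift : HasDerivAt (fun t : ℝ => s (x - 2 * k * τ t))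
      (-(2 * k * τ') • s' (x - 2 * k * τ t)) t :=
    (hs _).scomp t ((hτ.const_mul (2 * k)).const_sub x)
  refine (hphase.cexp.mul hshift).congr_deriv ?_
  simp only [modulatedWave, Complex.real_smul]
  push_cast
  ring

theorem modulatedWave_solves_vcNLS {θ' τ' : ℝ} (x t : ℝ) (hs : ∀ ξ, HasDerivAt s (s' ξ) ξ)
    (hs' : ∀ ξ, HasDerivAt s' (k ^ 2 * s ξ - (‖s ξ‖ : ℂ) ^ 2 * s ξ) ξ)
    (hθ : HasDerivAt θ θ' t) (hτ : HasDerivAt τ τ' t) :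
    I * deriv (fun t => modulatedWave θ τ s k x t) t
      + (τ' : ℂ) * deriv (deriv (fun y => modulatedWave θ τ s k y t)) x
      + (θ' : ℂ) * modulatedWave θ τ s k x t
      + (τ' : ℂ) * (‖modulatedWave θ τ s k x t‖ : ℂ) ^ 2 * modulatedWave θ τ s k x t = 0 := by
  have hs₁ : ∀ ξ, HasDerivAt (fun ξ => k * I * s ξ + s' ξ)
      (k * I * s' ξ + (k ^ 2 * s ξ - (‖s ξ‖ : ℂ) ^ 2 * s ξ)) ξ :=
    fun ξ => ((hs ξ).const_mul _).add (hs' ξ)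
  rw [(hasDerivAt_modulatedWave_time hs x t hθ hτ).deriv, deriv_modulatedWave_space hs,
    (hasDerivAt_modulatedWave_space hs₁ x t).deriv, norm_modulatedWave]
  simp only [modulatedWave]
  -- the `s'` terms cancel because the shift speed `2k` is twice the wave number
  linear_combination exp (↑(θ t + k * x) * I) * (θ' + k ^ 2 * τ') * s (x - 2 * k * τ t) * I_sq

end modulatedWave

lemma hasDerivAt_log_cosh (t : ℝ) :
    HasDerivAt (fun t => Real.log (Real.cosh t)) (Real.tanh t) t :=
  ((Real.hasDerivAt_cosh t).log (Real.cosh_pos t).ne').congr_deriv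
    (Real.tanh_eq_sinh_div_cosh t).symm

lemma exp_sub_two_mul_log_cosh (y t : ℝ) :
    Real.exp (y - 2 * Real.log (Real.cosh t)) = Real.exp y / Real.cosh t ^ 2 := by
  have h : 2 * Real.log (Real.cosh t) = Real.log (Real.cosh t ^ 2) := by
    rw [Real.log_pow, Nat.cast_ofNat]
  rw [Real.exp_sub, h, Real.exp_log (by positivity)]

lemma modulatedWave_solitonProfile_apply (y t : ℝ) :
    modulatedWave (fun t => t ^ 2 / 10) (fun t => Real.log (Real.cosh t))
        (fun ξ => (solitonProfile ξ : ℂ)) 1 y t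
      = exp (I * (t : ℂ) ^ 2 / 10) * exp ((1 + I) * (y : ℂ)) * ((Real.cosh t : ℂ) ^ 2)⁻¹ /
        (1 + (1 / 8) * exp (2 * (y : ℂ)) * ((Real.cosh t : ℂ) ^ 4)⁻¹) := by
  have hphase : exp (I * (t : ℂ) ^ 2 / 10) * exp ((1 + I) * (y : ℂ))
      = exp (((t ^ 2 / 10 + 1 * y : ℝ) : ℂ) * I) * exp y := by
    rw [← Complex.exp_add, ← Complex.exp_add]
    push_cast
    ring_nf
  have hexp : exp (2 * y) = exp y ^ 2 := by
    rw [← Complex.exp_nat_mul, Nat.cast_ofNat]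
  simp only [modulatedWave, solitonProfile, mul_one, exp_sub_two_mul_log_cosh, hphase]
  push_cast
  rw [hexp]
  ring

end

/-- The one-soliton solution of the vcNLS equation with hyperbolic coefficients
`α(t) = γ(t) = tanh t`, `β(t) = t/5`; here `e^{-2 ln cosh t} = (cosh t)⁻²`. -/
theorem vcNLS_soliton_tanh_coefficients :
    let A : ℝ → ℝ → ℂ := fun x t =>
      Complex.exp (Complex.I * (t : ℂ) ^ 2 / 10) *
        Complex.exp ((1 + Complex.I) * (x : ℂ)) * ((Real.cosh t : ℂ) ^ 2)⁻¹ /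
        (1 + (1 / 8) * Complex.exp (2 * (x : ℂ)) * ((Real.cosh t : ℂ) ^ 4)⁻¹)
    ∀ x t : ℝ,
      Complex.I * deriv (fun τ => A x τ) t
        + ((Real.tanh t : ℝ) : ℂ) * deriv (deriv (fun y => A y t)) x
        + ((t / 5 : ℝ) : ℂ) * A x t
        + ((Real.tanh t : ℝ) : ℂ) * (‖A x t‖ : ℂ) ^ 2 * A x t = 0 := by
  intro A x t
  have hA : A = modulatedWave (fun t => t ^ 2 / 10) (fun t => Real.log (Real.cosh t))
      (fun ξ => (solitonProfile ξ : ℂ)) 1 :=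
    funext fun y => funext fun t => (modulatedWave_solitonProfile_apply y t).symm
  have hθ : HasDerivAt (fun t : ℝ => t ^ 2 / 10) (t / 5) t :=
    ((hasDerivAt_pow 2 t).div_const 10).congr_deriv (by ring)
  rw [hA]
  exact modulatedWave_solves_vcNLS x t (fun ξ => (hasDerivAt_solitonProfile ξ).ofReal_comp)
    hasDerivAt_ofReal_solitonProfileDeriv hθ (hasDerivAt_log_cosh t)
end

section
/- The function A(x,t) = e^{i·t²/10} · e^{(1+i)x - arctan(t)} / (1 + (1/4)·e^{2x - 2·arctan(t)}) satisfies i·A_t + (1/(2(1+t²)))·A_xx + (t/5)·A + (1/(1+t²))·|A|²·A = 0 for all (x,t) ∈ ℝ². -/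
/-!
Writing `s = x - arctan t`, the amplitude is `e^s / (1 + e^{2s}/4) = sech (s - log 2)`, so
`A = e^{i(θ(t) + x)} q(x - a(t))` with `θ = t²/10`, `a = arctan + log 2` and `q = sech`.
For such a wave the equation reduces to three conditions: `q'' = q - 2q³` (the stationary NLS
equation, solved by `sech` since `cosh² - sinh² = 1`), `θ' = β`, and `a' = γ = 2α`, because
`α (A_xx + 2|A|²A) = 2iα e^{i(θ+x)} q'` is exactly cancelled by the drift `-iγ e^{i(θ+x)} q'` of
`i A_t`.
-/

open Complex

theorem Real.hasDerivAt_inv_cosh (s : ℝ) :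
    HasDerivAt (fun s => (Real.cosh s)⁻¹) (-Real.sinh s / Real.cosh s ^ 2) s :=
  (Real.hasDerivAt_cosh s).inv (Real.cosh_pos s).ne'

theorem Real.hasDerivAt_neg_sinh_div_cosh_sq (s : ℝ) :
    HasDerivAt (fun s => -Real.sinh s / Real.cosh s ^ 2)
      ((Real.cosh s)⁻¹ - 2 * (Real.cosh s)⁻¹ ^ 3) s := by
  refine ((Real.hasDerivAt_sinh s).neg.div ((Real.hasDerivAt_cosh s).pow 2)
    (pow_ne_zero 2 (Real.cosh_pos s).ne')).congr_deriv ?_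
  simp only [Pi.pow_apply, Pi.neg_apply, Nat.cast_ofNat]
  field_simp
  linear_combination (-2 * Real.cosh s) * Real.cosh_sq s

theorem Real.inv_cosh_sub_log_two (s : ℝ) :
    (Real.cosh (s - Real.log 2))⁻¹ = Real.exp s / (1 + 1 / 4 * Real.exp s ^ 2) := by
  rw [Real.cosh_eq, Real.exp_sub, neg_sub, Real.exp_sub, Real.exp_log two_pos]
  field_simp
  ring

theorem HasDerivAt.cexp_I_mul_add_mul {f : ℝ → ℂ} {f' : ℂ} {y : ℝ} (c : ℝ)
    (hf : HasDerivAt f f' y) :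
    HasDerivAt (fun y : ℝ => cexp (I * (c + y)) * f y) (cexp (I * (c + y)) * (I * f y + f')) y := by
  have hphase : HasDerivAt (fun y : ℝ => I * ((c : ℂ) + y)) I y := by
    simpa using (((hasDerivAt_id (y : ℂ)).const_add (c : ℂ)).const_mul I).comp_ofReal
  exact (hphase.cexp.mul hf).congr_deriv (by ring)

namespace VcNLS

def IsSolution (α β γ : ℝ → ℝ) (A : ℝ → ℝ → ℂ) : Prop :=
  ∀ x t, I * deriv (fun τ => A x τ) t + (α t : ℂ) * deriv (deriv fun y => A y t) x
    + (β t : ℂ) * A x t + (γ t : ℂ) * (‖A x t‖ : ℂ) ^ 2 * A x t = 0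

noncomputable def travelingWave (θ a q : ℝ → ℝ) : ℝ → ℝ → ℂ :=
  fun x t => exp (I * (θ t + x)) * q (x - a t)

theorem norm_travelingWave (θ a q : ℝ → ℝ) (x t : ℝ) :
    ‖travelingWave θ a q x t‖ = |q (x - a t)| := by
  rw [travelingWave, norm_mul, mul_comm I, ← ofReal_add, norm_exp_ofReal_mul_I, one_mul,
    norm_real, Real.norm_eq_abs]

theorem isSolution_travelingWave {α β γ θ a q q' : ℝ → ℝ}
    (hq : ∀ s, HasDerivAt q (q' s) s) (hq' : ∀ s, HasDerivAt q' (q s - 2 * q s ^ 3) s)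
    (hθ : ∀ t, HasDerivAt θ (β t) t) (ha : ∀ t, HasDerivAt a (γ t) t)
    (hγ : ∀ t, γ t = 2 * α t) :
    IsSolution α β γ (travelingWave θ a q) := by
  intro x t
  have hspace : deriv (fun y => travelingWave θ a q y t) =
      fun y : ℝ => exp (I * (θ t + y)) * (I * q (y - a t) + q' (y - a t)) := by
    funext y
    exact (HasDerivAt.cexp_I_mul_add_mul (θ t) ((hq _).comp_sub_const y (a t)).ofReal_comp).deriv
  have hspace₂ := HasDerivAt.cexp_I_mul_add_mul (θ t)
    (f := fun y : ℝ => I * q (y - a t) + q' (y - a t))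
    ((((hq _).comp_sub_const x (a t)).ofReal_comp.const_mul I).add
      ((hq' _).comp_sub_const x (a t)).ofReal_comp)
  have hprofile : HasDerivAt (fun τ => q (x - a τ)) (q' (x - a t) * -γ t) t :=
    (hq (x - a t)).comp t ((ha t).const_sub x)
  have htime : HasDerivAt (fun τ => travelingWave θ a q x τ) _ t :=
    (((hθ t).ofReal_comp.add_const (x : ℂ)).const_mul I).cexp.mul hprofile.ofReal_comp
  have hγ' : (γ t : ℂ) = 2 * α t := by exact_mod_cast hγ t
  rw [htime.deriv, hspace, hspace₂.deriv, norm_travelingWave, ← ofReal_pow, sq_abs, travelingWave]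
  push_cast
  linear_combination (exp (I * (θ t + x)) * (β t + α t) * q (x - a t)) * I_sq
    + exp (I * (θ t + x)) * (q (x - a t) ^ 3 - I * q' (x - a t)) * hγ'

end VcNLS

/-- The one-soliton solution of the vcNLS equation with fractional coefficients
`α(t) = 1/(2(1+t²))`, `β(t) = t/5`, `γ(t) = 1/(1+t²)`. -/
theorem vcNLS_soliton_fractional_coefficients :
    let A : ℝ → ℝ → ℂ := fun x t =>
      Complex.exp (Complex.I * (t : ℂ) ^ 2 / 10) *
        Complex.exp ((1 + Complex.I) * (x : ℂ) - (Real.arctan t : ℂ)) /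
        (1 + (1 / 4) * Complex.exp (2 * (x : ℂ) - 2 * (Real.arctan t : ℂ)))
    ∀ x t : ℝ,
      Complex.I * deriv (fun τ => A x τ) t
        + ((1 / (2 * (1 + t ^ 2)) : ℝ) : ℂ) * deriv (deriv (fun y => A y t)) x
        + ((t / 5 : ℝ) : ℂ) * A x t
        + ((1 / (1 + t ^ 2) : ℝ) : ℂ) * (‖A x t‖ : ℂ) ^ 2 * A x t = 0 := by
  intro A
  have hA : A = VcNLS.travelingWave (fun t => t ^ 2 / 10) (fun t => Real.arctan t + Real.log 2)
      (fun s => (Real.cosh s)⁻¹) := by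
    funext x t
    simp only [A, VcNLS.travelingWave, ← sub_sub, Real.inv_cosh_sub_log_two]
    generalize Real.arctan t = φ
    push_cast
    have hphase : I * ((t : ℂ) ^ 2 / 10 + x) = I * t ^ 2 / 10 + I * x := by ring
    have hsplit : (1 + I) * (x : ℂ) - φ = I * x + (x - φ) := by ring
    have hdouble : 2 * (x : ℂ) - 2 * φ = (x - φ) + (x - φ) := by ring
    rw [hphase, hsplit, hdouble, exp_add, exp_add, exp_add]
    ring
  rw [hA]
  refine VcNLS.isSolution_travelingWave (q' := fun s => -Real.sinh s / Real.cosh s ^ 2)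
    Real.hasDerivAt_inv_cosh Real.hasDerivAt_neg_sinh_div_cosh_sq (fun t => ?_)
    (fun t => (Real.hasDerivAt_arctan t).add_const _) (fun t => by field_simp)
  exact ((hasDerivAt_pow 2 t).div_const 10).congr_deriv (by ring)
end
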